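/- Fix vectors c, a_ℓ ∈ ℝⁿ and define a(x) = ⟨c, x⟩ and b(x) = ⟨a_ℓ, x⟩ (Euclidean inner products), and on the open set where a(x)² + b(x)² ≠ 0 define v(x) = (a(x)² + b(x)²)⁻¹ (b(x)·c − a(x)·a_ℓ) ∈ ℝⁿ. Then at every point d with a(d)² + b(d)² ≠ 0, v is differentiable and its Fréchet derivative is the linear map on ℝⁿ given by the n×n matrix V = [2ab(a_ℓ a_ℓᵀ − c cᵀ) + (a² − b²)(c a_ℓᵀ + a_ℓ cᵀ)] / (a² + b²)², where a = a(d), b = b(d) and uwᵀ denotes the outer product of vectors u, w ∈ ℝⁿ (note the squared denominator, correcting the unsquared denominator appearing in Crisfield and Moita). -/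

import Mathlib

/-!
By the product and chain rules, the derivative of `(a² + b²)⁻¹ • (b • c - a • aℓ)` in the
direction `h` is `(a² + b²)⁻¹ • (δb • c - δa • aℓ) - (2a δa + 2b δb)/(a² + b²)² • (b • c - a • aℓ)`
with `δa = ⟨c, h⟩`, `δb = ⟨aℓ, h⟩`. Over the common denominator `(a² + b²)²` the coefficient of
`c` is `(a² - b²) δb - 2ab δa` and that of `aℓ` is `(a² - b²) δa + 2ab δb`, which is `V h`, since
`(u wᵀ) h = ⟨w, h⟩ • u`.
-/

open Matrix

theorem hasFDerivAt_dotProduct {𝕜 ι : Type*} [NontriviallyNormedField 𝕜] [CompleteSpace 𝕜]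
    [Fintype ι] [DecidableEq ι] (v x : ι → 𝕜) :
    HasFDerivAt (v ⬝ᵥ ·) (LinearMap.toContinuousLinearMap (dotProductEquiv 𝕜 ι v)) x :=
  (LinearMap.toContinuousLinearMap (dotProductEquiv 𝕜 ι v)).hasFDerivAt

theorem Matrix.vecMulVec_mulVec_eq_smul {α m n : Type*} [CommSemiring α] [Fintype n]
    (u : m → α) (v w : n → α) : vecMulVec u v *ᵥ w = (v ⬝ᵥ w) • u := by
  rw [vecMulVec_mulVec, op_smul_eq_smul]

theorem HasFDerivAt.inv_sq_add_sq_smul_sub {𝕜 E F : Type*} [NontriviallyNormedField 𝕜]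
    [NormedAddCommGroup E] [NormedSpace 𝕜 E] [NormedAddCommGroup F] [NormedSpace 𝕜 F]
    {a b : E → 𝕜} {a' b' : E →L[𝕜] 𝕜} {x : E}
    (ha : HasFDerivAt a a' x) (hb : HasFDerivAt b b' x) (u w : F)
    (hx : a x ^ 2 + b x ^ 2 ≠ 0) :
    HasFDerivAt (fun y => (a y ^ 2 + b y ^ 2)⁻¹ • (b y • u - a y • w))
      (((a x ^ 2 + b x ^ 2) ^ 2)⁻¹ •
        ((2 * a x * b x) • (b'.smulRight w - a'.smulRight u) +
          (a x ^ 2 - b x ^ 2) • (b'.smulRight u + a'.smulRight w))) x := by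
  have hinv := (hasDerivAt_inv hx).comp_hasFDerivAt x ((ha.pow 2).fun_add (hb.pow 2))
  refine (hinv.smul ((hb.smul_const u).sub (ha.smul_const w))).congr_fderiv ?_
  ext h
  simp only [Function.comp_apply, Nat.add_one_sub_one, pow_one, nsmul_eq_mul, Nat.cast_ofNat,
    Pi.sub_apply, _root_.add_apply, _root_.smul_apply, _root_.sub_apply,
    ContinuousLinearMap.smulRight_apply, smul_eq_mul]
  rw [show (a x ^ 2 + b x ^ 2)⁻¹ = (a x ^ 2 + b x ^ 2) * ((a x ^ 2 + b x ^ 2) ^ 2)⁻¹ by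
    field_simp]
  module

/-- Fix `c, a_ℓ ∈ ℝⁿ`, let `a(x) = ⟨c, x⟩`, `b(x) = ⟨a_ℓ, x⟩`, and on the set
where `a² + b² ≠ 0` let `v(x) = (a² + b²)⁻¹ (b·c − a·a_ℓ)`.  At every point `d`
with `a(d)² + b(d)² ≠ 0`, `v` is differentiable with Fréchet derivative given by
the `n×n` matrix
`V = [2ab(a_ℓ a_ℓᵀ − c cᵀ) + (a² − b²)(c a_ℓᵀ + a_ℓ cᵀ)] / (a² + b²)²`
(note the squared denominator). -/
theorem hasFDerivAt_corotational_v {n : ℕ} (c aℓ : Fin n → ℝ) (d : Fin n → ℝ)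
    (hd : (∑ i, c i * d i) ^ 2 + (∑ i, aℓ i * d i) ^ 2 ≠ 0) :
    HasFDerivAt
      (fun x : Fin n → ℝ =>
        ((∑ i, c i * x i) ^ 2 + (∑ i, aℓ i * x i) ^ 2)⁻¹ •
          ((∑ i, aℓ i * x i) • c - (∑ i, c i * x i) • aℓ))
      (LinearMap.toContinuousLinearMap (Matrix.mulVecLin
        (((((∑ i, c i * d i) ^ 2 + (∑ i, aℓ i * d i) ^ 2) ^ 2)⁻¹ •
          ((2 * (∑ i, c i * d i) * (∑ i, aℓ i * d i)) •
              (Matrix.vecMulVec aℓ aℓ - Matrix.vecMulVec c c) +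
            ((∑ i, c i * d i) ^ 2 - (∑ i, aℓ i * d i) ^ 2) •
              (Matrix.vecMulVec c aℓ + Matrix.vecMulVec aℓ c)))))) d := by
  refine ((hasFDerivAt_dotProduct c d).inv_sq_add_sq_smul_sub
    (hasFDerivAt_dotProduct aℓ d) c aℓ hd).congr_fderiv ?_
  ext1 h
  simp only [LinearMap.coe_toContinuousLinearMap', mulVecLin_apply, smul_mulVec, add_mulVec,
    sub_mulVec, vecMulVec_mulVec_eq_smul, _root_.smul_apply, _root_.add_apply, _root_.sub_apply,
    ContinuousLinearMap.smulRight_apply, dotProductEquiv_apply_apply]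
  rfl
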